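/- Let $p$ be an odd prime power, $\delta$ a generator of the group of nonzero squares of $\mathbb{F}_p$, and $(f_0,\dots,f_{p-1}) = (0,\delta,\delta,\delta^2,\delta^2,\ldots,\delta^{(p-1)/2},\delta^{(p-1)/2})$, with second coordinates $(\phi_0,\dots,\phi_{p-1}) = (0,y_1,-y_1,\ldots,y_{(p-1)/2},-y_{(p-1)/2})$ where $y_i \in \mathbb{F}_q^*$ and $q$ is an odd prime power. Then for each nonzero $h \in \mathbb{F}_p$, the multiset $T_h = [\phi_a - \phi_b : f_a - f_b = h, a \neq b]$ is invariant under negation (i.e., $T_h = \{1,-1\} \cdot D_h$ for some multiset $D_h$ of size $(p-1)/2$), each entry of $D_h$ has the form $y_i - y_j$, $y_i + y_j$, or $y_i$, and $T_h = T_{-h}$. -/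

import Mathlib

/-!
The involution `paleyFlip`, which swaps the two copies of each `δ^k`, fixes the first
coordinates and negates the second. It therefore pairs every ordered pair `(a, b)` counted
in `T_h` with one whose difference is the negative; `D_h` collects the representative whose
first entry carries `+yᵢ` (or, when the first entry is `0`, whose second carries `-yⱼ`).
Swapping `a` and `b` gives `T_{-h} = -T_h`, which is `T_h` again. For `|D_h| = m`: choosing
square roots of the `δ^k` reindexes the first coordinates as `x²` with `x` running over
`F_p`, and `u² - v² = h` has `p - 1` solutions because it reads `(u - v)(u + v) = h`.
-/

open scoped Classical

/-- The multiset `[φ a - φ b : f a - f b = h, a ≠ b]` of second-coordinate differences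
taken over ordered pairs of distinct positions whose first-coordinate difference is `h`. -/
def Tdiff {ι Fp Fq : Type*} [Fintype ι] [DecidableEq ι] [AddCommGroup Fp] [DecidableEq Fp]
    [AddCommGroup Fq] (f : ι → Fp) (φ : ι → Fq) (h : Fp) : Multiset Fq :=
  ((Finset.univ.offDiag : Finset (ι × ι)).filter fun p => f p.1 - f p.2 = h).val.map
    fun p => φ p.1 - φ p.2

/-- The first-type Paley sequence `(0, δ, δ, δ², δ², …, δ^m, δ^m)` with `m = (p-1)/2`:
position `none` carries `0` and position `(i,t)` carries `δ^(i+1)`. -/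
def paley1fst' {Fp : Type*} [Field Fp] (δ : Fp) (m : ℕ) : Option (Fin m × Fin 2) → Fp
  | none => 0
  | some (i, _) => δ ^ ((i : ℕ) + 1)

/-- The corresponding second coordinates `(0, y₁, -y₁, …, y_m, -y_m)`. -/
def paley1snd' {Fq : Type*} [Field Fq] {m : ℕ} (y : Fin m → Fq) :
    Option (Fin m × Fin 2) → Fq
  | none => 0
  | some (i, t) => (if (t : ℕ) = 0 then 1 else -1) * y i

open Finset Function

theorem card_filter_sq_sub_sq_eq {F : Type*} [Field F] [Fintype F] [DecidableEq F]
    (h2 : (2 : F) ≠ 0) {h : F} (hh : h ≠ 0) :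
    #{q : F × F | q.1 ^ 2 - q.2 ^ 2 = h} = Fintype.card F - 1 := by
  rw [← card_univ, ← card_erase_of_mem (mem_univ 0)]
  refine card_nbij' (fun q => q.1 - q.2) (fun a => ((a + h / a) / 2, (h / a - a) / 2))
    ?_ ?_ ?_ ?_
  · rintro ⟨u, v⟩ huv
    simp only [coe_filter, mem_univ, true_and, Set.mem_ofPred_eq] at huv
    simp only [coe_erase, coe_univ, Set.mem_sdiff, Set.mem_univ, Set.mem_singleton_iff,
      true_and, sub_eq_zero]
    rintro rfl
    exact hh (by rw [← huv]; ring)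
  · intro a ha
    simp only [coe_erase, coe_univ, Set.mem_sdiff, Set.mem_univ, Set.mem_singleton_iff,
      true_and] at ha
    simp only [coe_filter, mem_univ, true_and, Set.mem_ofPred_eq]
    field_simp
    ring
  · rintro ⟨u, v⟩ huv
    simp only [coe_filter, mem_univ, true_and, Set.mem_ofPred_eq] at huv
    have huv0 : u - v ≠ 0 := fun h0 => hh (by rw [← huv, sub_eq_zero.mp h0]; ring)
    have hsum : h / (u - v) = u + v := by
      rw [div_eq_iff huv0, ← huv]; ring
    simp only [hsum, Prod.mk.injEq]
    constructor <;> field_simp <;> ring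
  · intro a ha
    simp only [coe_erase, coe_univ, Set.mem_sdiff, Set.mem_univ, Set.mem_singleton_iff,
      true_and] at ha
    field_simp
    ring

theorem card_Tdiff_of_sq_equiv {ι F Fq : Type*} [Fintype ι] [DecidableEq ι] [Field F]
    [Fintype F] [DecidableEq F] [AddCommGroup Fq] {f : ι → F} (φ : ι → Fq) (g : ι ≃ F)
    (hg : ∀ a, g a ^ 2 = f a) (h2 : (2 : F) ≠ 0) {h : F} (hh : h ≠ 0) :
    Multiset.card (Tdiff f φ h) = Fintype.card F - 1 := by
  rw [Tdiff, Multiset.card_map, ← card_filter_sq_sub_sq_eq h2 hh]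
  refine card_equiv (g.prodCongr g) fun p => ?_
  simp only [mem_filter, mem_offDiag, mem_univ, true_and, Equiv.prodCongr_apply, Prod.map, hg]
  exact ⟨And.right, fun hp => ⟨fun he => hh (by rw [← hp, he, sub_self]), hp⟩⟩

theorem Tdiff_neg {ι Fp Fq : Type*} [Fintype ι] [DecidableEq ι] [AddCommGroup Fp]
    [DecidableEq Fp] [AddCommGroup Fq] (f : ι → Fp) (φ : ι → Fq) (h : Fp) :
    Tdiff f φ (-h) = (Tdiff f φ h).map Neg.neg := by
  have hswap : ({p ∈ univ.offDiag | f p.1 - f p.2 = -h} : Finset (ι × ι)) =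
      ({p ∈ univ.offDiag | f p.1 - f p.2 = h} : Finset (ι × ι)).map
        (Equiv.prodComm ι ι).toEmbedding := by
    ext ⟨a, b⟩
    simp only [mem_filter, mem_offDiag, mem_univ, true_and, mem_map_equiv,
      Equiv.prodComm_symm, Equiv.prodComm_apply, Prod.swap_prod_mk, ne_comm (a := a)]
    constructor <;> rintro ⟨hab, he⟩ <;> exact ⟨hab, by rw [← neg_sub]; simp [he]⟩
  rw [Tdiff, Tdiff, hswap, map_val, Multiset.map_map, Multiset.map_map]
  refine Multiset.map_congr rfl fun p _ => ?_
  simp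

theorem exists_Tdiff_eq_add_neg {ι Fp Fq : Type*} [Fintype ι] [DecidableEq ι]
    [AddCommGroup Fp] [DecidableEq Fp] [AddCommGroup Fq] {f : ι → Fp} {φ : ι → Fq}
    {σ : ι → ι} (hσ : Involutive σ) (hf : ∀ a, f (σ a) = f a) (hφ : ∀ a, φ (σ a) = -φ a)
    {P : ι → ι → Prop} (hP : ∀ a b, a ≠ b → (P (σ a) (σ b) ↔ ¬ P a b)) (h : Fp) :
    ∃ D : Multiset Fq, Tdiff f φ h = D + D.map Neg.neg ∧
      ∀ z ∈ D, ∃ a b, P a b ∧ z = φ a - φ b := by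
  set S : Finset (ι × ι) := {p ∈ univ.offDiag | f p.1 - f p.2 = h}
  set τ : ι × ι ↪ ι × ι := ⟨Prod.map σ σ, hσ.injective.prodMap hσ.injective⟩
  have hSne : ∀ p ∈ S, p.1 ≠ p.2 := fun p hp => (mem_offDiag.mp (mem_filter.mp hp).1).2.2
  have hτS : ∀ p ∈ S, τ p ∈ S := by
    intro p hp
    simpa only [S, τ, mem_filter, mem_offDiag, mem_univ, true_and, Embedding.coeFn_mk,
      Prod.map, hf, hσ.injective.ne_iff] using hp
  have hbad : {p ∈ S | ¬ P p.1 p.2} = {p ∈ S | P p.1 p.2}.map τ := by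
    ext p
    simp only [mem_filter, mem_map]
    constructor
    · rintro ⟨hp, hnP⟩
      refine ⟨τ p, ⟨hτS p hp, (hP _ _ (hSne p hp)).mpr hnP⟩, Prod.ext (hσ p.1) (hσ p.2)⟩
    · rintro ⟨p, ⟨hp, hPp⟩, rfl⟩
      exact ⟨hτS p hp, fun h' => (hP _ _ (hSne p hp)).mp h' hPp⟩
  set D := {p ∈ S | P p.1 p.2}.val.map fun p => φ p.1 - φ p.2
  refine ⟨D, ?_, fun z hz => ?_⟩
  · rw [Tdiff, ← Multiset.filter_add_not (fun p => P p.1 p.2) S.val, Multiset.map_add,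
      ← filter_val, ← filter_val, hbad, map_val, Multiset.map_map, Multiset.map_map]
    congr 1
    refine Multiset.map_congr rfl fun p _ => ?_
    simp [τ, hφ, neg_add_eq_sub]
  · obtain ⟨p, hp, rfl⟩ := Multiset.mem_map.mp hz
    exact ⟨p.1, p.2, (mem_filter.mp hp).2, rfl⟩

section Paley

variable {m : ℕ}

def paleyFlip : Option (Fin m × Fin 2) → Option (Fin m × Fin 2) :=
  Option.map (Prod.map id Fin.rev)

theorem paleyFlip_involutive : Involutive (paleyFlip (m := m)) := by
  rintro (_ | ⟨i, t⟩) <;> simp [paleyFlip]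

theorem paley1fst'_paleyFlip {Fp : Type*} [Field Fp] (δ : Fp) (a : Option (Fin m × Fin 2)) :
    paley1fst' δ m (paleyFlip a) = paley1fst' δ m a := by
  rcases a with _ | ⟨i, t⟩ <;> rfl

theorem paley1snd'_paleyFlip {Fq : Type*} [Field Fq] (y : Fin m → Fq)
    (a : Option (Fin m × Fin 2)) : paley1snd' y (paleyFlip a) = -paley1snd' y a := by
  rcases a with _ | ⟨i, t⟩
  · simp [paleyFlip, paley1snd']
  · fin_cases t <;> simp [paleyFlip, paley1snd']

def IsPaleyRep : Option (Fin m × Fin 2) → Option (Fin m × Fin 2) → Prop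
  | some (_, t), _ => t = 0
  | none, some (_, s) => s = 1
  | none, none => False

theorem isPaleyRep_paleyFlip_iff {a b : Option (Fin m × Fin 2)} (hab : a ≠ b) :
    IsPaleyRep (paleyFlip a) (paleyFlip b) ↔ ¬ IsPaleyRep a b := by
  rcases a with _ | ⟨i, t⟩ <;> rcases b with _ | ⟨j, s⟩
  · exact absurd rfl hab
  · fin_cases s <;> simp [paleyFlip, IsPaleyRep]
  all_goals fin_cases t <;> simp [paleyFlip, IsPaleyRep]

theorem paley1snd'_sub_of_isPaleyRep {Fq : Type*} [Field Fq] (y : Fin m → Fq)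
    {a b : Option (Fin m × Fin 2)} (hab : IsPaleyRep a b) :
    (∃ i j : Fin m, paley1snd' y a - paley1snd' y b = y i - y j ∨
        paley1snd' y a - paley1snd' y b = y i + y j) ∨
      ∃ i : Fin m, paley1snd' y a - paley1snd' y b = y i := by
  rcases a with _ | ⟨i, t⟩ <;> rcases b with _ | ⟨j, s⟩ <;> simp only [IsPaleyRep] at hab
  · subst hab
    exact Or.inr ⟨j, by simp [paley1snd']⟩
  · subst hab
    exact Or.inr ⟨i, by simp [paley1snd']⟩
  · subst hab
    fin_cases s
    · exact Or.inl ⟨i, j, Or.inl (by simp [paley1snd'])⟩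
    · exact Or.inl ⟨i, j, Or.inr (by simp [paley1snd'])⟩

theorem exists_equiv_sq_eq_paley1fst' {Fp : Type*} [Field Fp] [Fintype Fp]
    (hm : Fintype.card Fp = 2 * m + 1) {δ : Fp}
    (hδ : ∀ x : Fp, (x ≠ 0 ∧ IsSquare x) ↔ ∃ i : ℕ, δ ^ i = x) :
    ∃ g : Option (Fin m × Fin 2) ≃ Fp, ∀ a, g a ^ 2 = paley1fst' δ m a := by
  have hroot : ∀ i : Fin m, ∃ c : Fp, c ^ 2 = δ ^ ((i : ℕ) + 1) := fun i => by
    obtain ⟨-, c, hc⟩ := (hδ (δ ^ ((i : ℕ) + 1))).mpr ⟨_, rfl⟩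
    exact ⟨c, by rw [hc, sq]⟩
  choose c hc using hroot
  -- `paley1snd' c` puts the two square roots `±cᵢ` at the two copies of `δ^(i+1)`.
  have hsq : ∀ a, paley1snd' c a ^ 2 = paley1fst' δ m a := by
    rintro (_ | ⟨i, t⟩)
    · simp [paley1snd', paley1fst']
    · fin_cases t <;> simp [paley1snd', paley1fst', hc]
  have hδm : δ ^ m = 1 := by
    obtain ⟨hδ0, r, rfl⟩ := (hδ δ).mpr ⟨1, pow_one δ⟩
    have hr : r ≠ 0 := by rintro rfl; simp at hδ0
    rw [← sq, ← pow_mul, ← FiniteField.pow_card_sub_one_eq_one r hr, hm]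
    rfl
  have hm0 : 0 < m := by
    have := Fintype.one_lt_card (α := Fp)
    omega
  have hsurj : Surjective (paley1snd' c) := by
    intro x
    by_cases hx : x = 0
    · exact ⟨none, hx ▸ rfl⟩
    obtain ⟨n, hn⟩ := (hδ (x ^ 2)).mp ⟨pow_ne_zero 2 hx, x, sq x⟩
    let i : Fin m := ⟨(n + m - 1) % m, Nat.mod_lt _ hm0⟩
    have hci : c i ^ 2 = x ^ 2 := by
      rw [hc, ← hn, pow_eq_pow_mod _ hδm, pow_eq_pow_mod n hδm, Nat.mod_add_mod,
        Nat.sub_add_cancel (by omega), Nat.add_mod_right]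
    rcases sq_eq_sq_iff_eq_or_eq_neg.mp hci with hci | hci
    · exact ⟨some (i, 0), by simp [paley1snd', hci]⟩
    · exact ⟨some (i, 1), by simp [paley1snd', hci]⟩
  have hbij : Bijective (paley1snd' c) :=
    (Fintype.bijective_iff_surjective_and_card _).mpr ⟨hsurj, by simp [hm]; ring⟩
  exact ⟨Equiv.ofBijective _ hbij, hsq⟩

end Paley

theorem paper_stmt_18_general {Fp Fq : Type*} [Field Fp] [Fintype Fp] [DecidableEq Fp] [Field Fq]
    (m : ℕ) (hm : Fintype.card Fp = 2 * m + 1)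
    (δ : Fp) (hδ : ∀ x : Fp, (x ≠ 0 ∧ IsSquare x) ↔ ∃ i : ℕ, δ ^ i = x)
    (y : Fin m → Fq) :
    ∀ h : Fp, h ≠ 0 →
      (∃ Dh : Multiset Fq,
        Tdiff (paley1fst' δ m) (paley1snd' y) h =
          (({1, -1} : Multiset Fq).bind fun c => Dh.map fun z => c * z) ∧
        Multiset.card Dh = m ∧
        ∀ z ∈ Dh, (∃ i j : Fin m, z = y i - y j ∨ z = y i + y j) ∨ ∃ i : Fin m, z = y i) ∧
      Tdiff (paley1fst' δ m) (paley1snd' y) h =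
        Tdiff (paley1fst' δ m) (paley1snd' y) (-h) := by
  intro h hh
  obtain ⟨D, hT, hD⟩ := exists_Tdiff_eq_add_neg paleyFlip_involutive
    (paley1fst'_paleyFlip δ) (paley1snd'_paleyFlip y) (fun _ _ => isPaleyRep_paleyFlip_iff) h
  have h2 : (2 : Fp) ≠ 0 := Ring.two_ne_zero fun hchar => by
    have := FiniteField.even_card_of_char_two hchar
    omega
  obtain ⟨g, hg⟩ := exists_equiv_sq_eq_paley1fst' hm hδ
  have hcard := card_Tdiff_of_sq_equiv (paley1snd' y) g hg h2 hh
  refine ⟨⟨D, ?_, ?_, fun z hz => ?_⟩, ?_⟩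
  · simp [hT, Multiset.insert_eq_cons]
  · rw [hT, Multiset.card_add, Multiset.card_map, hm] at hcard
    omega
  · obtain ⟨a, b, hab, rfl⟩ := hD z hz
    exact paley1snd'_sub_of_isPaleyRep y hab
  · rw [Tdiff_neg, hT]
    simp [Multiset.map_map, add_comm]

/-- Lemma 3.12: for `p` an odd prime power, `δ` a generator of the nonzero squares of
`F_p`, `q` an odd prime power, and arbitrary `y₁,…,y_m ∈ F_q^*` (`m = (p-1)/2`), for
each nonzero `h ∈ F_p` the multiset `T_h` is invariant under negation — it has the form
`{1,-1} · D_h` for a multiset `D_h` of size `(p-1)/2` whose entries are of the form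
`yᵢ - yⱼ`, `yᵢ + yⱼ` or `yᵢ` — and `T_h = T_{-h}`. -/
theorem paper_stmt_18 {Fp Fq : Type*} [Field Fp] [Fintype Fp] [DecidableEq Fp] [Field Fq]
    (m : ℕ) (hm : Fintype.card Fp = 2 * m + 1)
    (δ : Fp) (hδ : ∀ x : Fp, (x ≠ 0 ∧ IsSquare x) ↔ ∃ i : ℕ, δ ^ i = x)
    (h2 : (2 : Fq) ≠ 0)
    (y : Fin m → Fq) (hy : ∀ i, y i ≠ 0) :
    ∀ h : Fp, h ≠ 0 →
      (∃ Dh : Multiset Fq,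
        Tdiff (paley1fst' δ m) (paley1snd' y) h =
          (({1, -1} : Multiset Fq).bind fun c => Dh.map fun z => c * z) ∧
        Multiset.card Dh = m ∧
        ∀ z ∈ Dh, (∃ i j : Fin m, z = y i - y j ∨ z = y i + y j) ∨ ∃ i : Fin m, z = y i) ∧
      Tdiff (paley1fst' δ m) (paley1snd' y) h =
        Tdiff (paley1fst' δ m) (paley1snd' y) (-h) :=
  paper_stmt_18_general m hm δ hδ y
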